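/- arXiv:2302.08621 — 4 statements merged into one kernel-verified Lean document; each statement's English description precedes it below -/
import Mathlib

section
/- If the finite Markov chains 𝒳 and 𝒴 are stationary (i.e., their initial distributions are stationary for their respective kernels), then for every probability distribution p on ℕ and every cost matrix C: X×Y → ℝ₊, one has d_OTM^p(𝒳,𝒴;C) ≤ d_OTC(𝒳,𝒴;C). -/
/-
A time-homogeneous coupling whose initial coupling `ν` is stationary for its kernel has law `ν`
at every time, so, viewed as a Markovian coupling, its OTM cost is
`∑' t, p t * ∑ z, C z * ν z = ∑ z, C z * ν z`. Stationarity of the chains makes the infimum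
defining `dOTC` nonempty (an empty real infimum would be the junk value `0`): the independent
coupling of the two chains qualifies.
-/

open scoped BigOperators
open Filter Topology

/-- A probability vector on a finite type. -/
def IsProb {X : Type*} [Fintype X] (ν : X → ℝ) : Prop :=
  (∀ x, 0 ≤ ν x) ∧ ∑ x, ν x = 1

/-- `μ` is a coupling of `α` and `β`. -/
def IsCoupling {X Y : Type*} [Fintype X] [Fintype Y]
    (μ : X × Y → ℝ) (α : X → ℝ) (β : Y → ℝ) : Prop :=
  (∀ z, 0 ≤ μ z) ∧ (∀ x, ∑ y, μ (x, y) = α x) ∧ (∀ y, ∑ x, μ (x, y) = β y)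

/-- A finite Markov chain: a transition kernel together with an initial distribution. -/
structure MarkovChain (X : Type*) [Fintype X] where
  kernel : X → X → ℝ
  init : X → ℝ
  kernel_prob : ∀ x, IsProb (kernel x)
  init_prob : IsProb init

/-- A Markovian coupling between two finite Markov chains.  `trans t` is the
transition coupling used from time `t` to time `t+1` (i.e. `m^{(t+1)}`). -/
structure MarkovCoupling {X Y : Type*} [Fintype X] [Fintype Y]
    (MX : MarkovChain X) (MY : MarkovChain Y) where
  init : X × Y → ℝ
  trans : ℕ → X × Y → X × Y → ℝ
  init_coupling : IsCoupling init MX.init MY.init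
  trans_coupling : ∀ t xy, IsCoupling (trans t xy) (MX.kernel xy.1) (MY.kernel xy.2)

/-- Time-`t` law determined by an initial distribution and step kernels. -/
noncomputable def lawAux {X Y : Type*} [Fintype X] [Fintype Y]
    (ν : X × Y → ℝ) (m : ℕ → X × Y → X × Y → ℝ) : ℕ → X × Y → ℝ
  | 0 => ν
  | t + 1 => fun z => ∑ w : X × Y, m t w z * lawAux ν m t w

/-- The time-`t` law of a Markovian coupling. -/
noncomputable def MarkovCoupling.law {X Y : Type*} [Fintype X] [Fintype Y]
    {MX : MarkovChain X} {MY : MarkovChain Y} (π : MarkovCoupling MX MY) :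
    ℕ → X × Y → ℝ :=
  lawAux π.init π.trans

/-- `p` is a probability distribution on `ℕ`. -/
def IsProbNat (p : ℕ → ℝ) : Prop := (∀ t, 0 ≤ p t) ∧ HasSum p 1

/-- The Optimal Transport Markov (OTM) distance associated to `p`. -/
noncomputable def dOTM {X Y : Type*} [Fintype X] [Fintype Y] (p : ℕ → ℝ)
    (MX : MarkovChain X) (MY : MarkovChain Y) (C : X × Y → ℝ) : ℝ :=
  ⨅ π : MarkovCoupling MX MY, ∑' t, p t * ∑ z : X × Y, C z * π.law t z

/-- A Markovian coupling is time homogeneous if its transition couplings do not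
depend on the time index. -/
def IsTimeHomogeneous {X Y : Type*} [Fintype X] [Fintype Y]
    {MX : MarkovChain X} {MY : MarkovChain Y} (π : MarkovCoupling MX MY) : Prop :=
  ∀ t, π.trans t = π.trans 0

/-- The initial coupling is stationary for the coupled transition kernel. -/
def HasStationaryInit {X Y : Type*} [Fintype X] [Fintype Y]
    {MX : MarkovChain X} {MY : MarkovChain Y} (π : MarkovCoupling MX MY) : Prop :=
  ∀ z' : X × Y, ∑ z : X × Y, π.trans 0 z z' * π.init z = π.init z'

/-- A Markov chain is stationary if its initial distribution is stationary for its kernel. -/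
def IsStationaryMC {X : Type*} [Fintype X] (M : MarkovChain X) : Prop :=
  ∀ x', ∑ x, M.kernel x x' * M.init x = M.init x'

/-- The optimal transition coupling (OTC) distance. -/
noncomputable def dOTC {X Y : Type*} [Fintype X] [Fintype Y]
    (MX : MarkovChain X) (MY : MarkovChain Y) (C : X × Y → ℝ) : ℝ :=
  ⨅ π : {π : MarkovCoupling MX MY // IsTimeHomogeneous π ∧ HasStationaryInit π},
    ∑ z : X × Y, C z * π.1.init z

theorem IsCoupling.of_mul {X Y : Type*} [Fintype X] [Fintype Y] {α : X → ℝ} {β : Y → ℝ}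
    (hα : IsProb α) (hβ : IsProb β) : IsCoupling (fun z => α z.1 * β z.2) α β :=
  ⟨fun z => mul_nonneg (hα.1 z.1) (hβ.1 z.2),
    fun x => by dsimp only; rw [← Finset.mul_sum, hβ.2, mul_one],
    fun y => by dsimp only; rw [← Finset.sum_mul, hα.2, one_mul]⟩

section lawAux

variable {X Y : Type*} [Fintype X] [Fintype Y] {ν : X × Y → ℝ} {m : ℕ → X × Y → X × Y → ℝ}

theorem lawAux_nonneg (hν : ∀ z, 0 ≤ ν z) (hm : ∀ t w z, 0 ≤ m t w z) :
    ∀ t z, 0 ≤ lawAux ν m t z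
  | 0, z => hν z
  | t + 1, _ => Finset.sum_nonneg fun w _ => mul_nonneg (hm t w _) (lawAux_nonneg hν hm t w)

theorem lawAux_eq_of_stationary (hm : ∀ t, m t = m 0)
    (hν : ∀ z', ∑ z, m 0 z z' * ν z = ν z') : ∀ t, lawAux ν m t = ν
  | 0 => rfl
  | t + 1 => funext fun z' => by
    simp only [lawAux, lawAux_eq_of_stationary hm hν t, hm t, hν]

end lawAux

namespace MarkovCoupling

variable {X Y : Type*} [Fintype X] [Fintype Y] {MX : MarkovChain X} {MY : MarkovChain Y}

theorem law_nonneg (π : MarkovCoupling MX MY) (t : ℕ) (z : X × Y) : 0 ≤ π.law t z :=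
  lawAux_nonneg π.init_coupling.1 (fun t w => (π.trans_coupling t w).1) t z

theorem law_eq_init (π : MarkovCoupling MX MY) (hπ : IsTimeHomogeneous π)
    (hinit : HasStationaryInit π) (t : ℕ) : π.law t = π.init :=
  lawAux_eq_of_stationary hπ hinit t

noncomputable def indep (MX : MarkovChain X) (MY : MarkovChain Y) : MarkovCoupling MX MY where
  init z := MX.init z.1 * MY.init z.2
  trans _ w z := MX.kernel w.1 z.1 * MY.kernel w.2 z.2
  init_coupling := IsCoupling.of_mul MX.init_prob MY.init_prob
  trans_coupling _ w := IsCoupling.of_mul (MX.kernel_prob w.1) (MY.kernel_prob w.2)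

theorem isTimeHomogeneous_indep : IsTimeHomogeneous (indep MX MY) := fun _ => rfl

theorem hasStationaryInit_indep (hMX : IsStationaryMC MX) (hMY : IsStationaryMC MY) :
    HasStationaryInit (indep MX MY) := fun z' => by
  calc ∑ z : X × Y, MX.kernel z.1 z'.1 * MY.kernel z.2 z'.2 * (MX.init z.1 * MY.init z.2)
      = (∑ x, MX.kernel x z'.1 * MX.init x) * ∑ y, MY.kernel y z'.2 * MY.init y := by
        rw [Finset.sum_mul_sum, Fintype.sum_prod_type]
        exact Finset.sum_congr rfl fun _ _ => Finset.sum_congr rfl fun _ _ => by ring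
    _ = MX.init z'.1 * MY.init z'.2 := by rw [hMX, hMY]

end MarkovCoupling

/-- For stationary Markov chains, the OTC distance is an upper bound for every
OTM distance. -/
theorem stmt2 {X Y : Type*} [Fintype X] [Fintype Y]
    (MX : MarkovChain X) (MY : MarkovChain Y)
    (hMX : IsStationaryMC MX) (hMY : IsStationaryMC MY)
    (C : X × Y → ℝ) (hC : ∀ z, 0 ≤ C z)
    (p : ℕ → ℝ) (hp : IsProbNat p) :
    dOTM p MX MY C ≤ dOTC MX MY C := by
  have : Nonempty {π : MarkovCoupling MX MY // IsTimeHomogeneous π ∧ HasStationaryInit π} :=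
    ⟨⟨.indep MX MY, MarkovCoupling.isTimeHomogeneous_indep,
      MarkovCoupling.hasStationaryInit_indep hMX hMY⟩⟩
  refine le_ciInf fun ⟨π, hπ, hinit⟩ => ?_
  have hbdd : BddBelow (Set.range fun σ : MarkovCoupling MX MY =>
      ∑' t, p t * ∑ z : X × Y, C z * σ.law t z) := by
    refine ⟨0, ?_⟩
    rintro _ ⟨σ, rfl⟩
    exact tsum_nonneg fun t => mul_nonneg (hp.1 t)
      (Finset.sum_nonneg fun z _ => mul_nonneg (hC z) (σ.law_nonneg t z))
  calc dOTM p MX MY C ≤ ∑' t, p t * ∑ z : X × Y, C z * π.law t z := ciInf_le hbdd π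
    _ = (∑' t, p t) * ∑ z : X × Y, C z * π.init z := by
      simp only [π.law_eq_init hπ hinit, tsum_mul_right]
    _ = ∑ z : X × Y, C z * π.init z := by rw [hp.2.tsum_eq, one_mul]
end

section
/- For any finite Markov chains 𝒳 and 𝒴, any cost matrix C: X×Y → ℝ₊, and any δ > 0, the infimum defining d_WL^{δ,(∞)}(𝒳,𝒴;C) is attained by a time-homogeneous Markovian coupling: d_WL^{δ,(∞)}(𝒳,𝒴;C) = min over time-homogeneous Markovian couplings of Σ_{t∈ℕ} δ(1−δ)^t Σ_{x,y} C(x,y) μ_t(x,y). -/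
/-!
Dynamic programming. The Bellman operator
`f ↦ δ C + (1 - δ) · (optimal transport cost of f between the two kernels)` is a
`(1 - δ)`-contraction for the sup norm, so it has a fixed point `V`. The discounted cost from a
point mass satisfies a one-step equation, and comparing it with the fixed-point equation of `V`
(the difference shrinks by the factor `1 - δ` at every step) shows that it is at least `V` for
every Markovian coupling, and at most `V` for the time-homogeneous coupling that uses at every
state an optimal coupling of the kernels for `V`. Starting the latter from an initial coupling
minimising `∑ ν V` makes it optimal.
-/

open scoped BigOperators
open Filter Topology

/-- A Markov chain is stationary if its initial distribution is stationary for its kernel. -/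
def IsStationaryChain {X : Type*} [Fintype X] (M : MarkovChain X) : Prop :=
  ∀ x', ∑ x, M.kernel x x' * M.init x = M.init x'

/-- The geometric distribution `p_δ^∞` on `ℕ`. -/
noncomputable def pGeom (δ : ℝ) : ℕ → ℝ := fun t => δ * (1 - δ) ^ t

/-- The truncation `p_δ^k` of the geometric distribution at `k`. -/
noncomputable def pTrunc (δ : ℝ) (k : ℕ) : ℕ → ℝ := fun t =>
  if t < k then δ * (1 - δ) ^ t else if t = k then (1 - δ) ^ k else 0

section Coupling

variable {ι X Y : Type*} [Fintype ι] [Fintype X] [Fintype Y]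

lemma IsProb.le_one {ν : ι → ℝ} (h : IsProb ν) (i : ι) : ν i ≤ 1 :=
  h.2 ▸ Finset.single_le_sum (fun j _ => h.1 j) (Finset.mem_univ i)

lemma isProb_single [DecidableEq ι] (i : ι) : IsProb (Pi.single i (1 : ℝ)) :=
  ⟨fun j => by by_cases h : j = i <;> simp [h], by simp⟩

lemma IsProb.abs_sum_mul_le {μ : ι → ℝ} (hμ : IsProb μ) (f : ι → ℝ) :
    |∑ i, μ i * f i| ≤ ‖f‖ :=
  calc |∑ i, μ i * f i| ≤ ∑ i, μ i * ‖f‖ := by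
        refine (Finset.abs_sum_le_sum_abs _ _).trans (Finset.sum_le_sum fun i _ => ?_)
        rw [abs_mul, abs_of_nonneg (hμ.1 i), ← Real.norm_eq_abs]
        exact mul_le_mul_of_nonneg_left (norm_le_pi_norm f i) (hμ.1 i)
    _ = ‖f‖ := by rw [← Finset.sum_mul, hμ.2, one_mul]

lemma IsCoupling.isProb {μ : X × Y → ℝ} {α : X → ℝ} {β : Y → ℝ}
    (h : IsCoupling μ α β) (hα : IsProb α) : IsProb μ :=
  ⟨h.1, by rw [Fintype.sum_prod_type]; simp_rw [h.2.1]; exact hα.2⟩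

lemma isCoupling_mul {α : X → ℝ} {β : Y → ℝ} (hα : IsProb α) (hβ : IsProb β) :
    IsCoupling (fun z => α z.1 * β z.2) α β :=
  ⟨fun z => mul_nonneg (hα.1 _) (hβ.1 _),
    fun x => by simp only [← Finset.mul_sum, hβ.2, mul_one],
    fun y => by simp only [← Finset.sum_mul, hα.2, one_mul]⟩

lemma isCompact_setOf_isCoupling {α : X → ℝ} (β : Y → ℝ) (hα : IsProb α) :
    IsCompact {μ : X × Y → ℝ | IsCoupling μ α β} := by
  refine (isCompact_univ_pi fun _ => isCompact_Icc (a := (0 : ℝ)) (b := 1)).of_isClosed_subset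
    ?_ fun μ hμ z _ => ⟨hμ.1 z, ?_⟩
  · simp only [IsCoupling, Set.ofPred_and, Set.ofPred_forall]
    refine .inter (isClosed_iInter fun z => isClosed_le continuous_const (continuous_apply z))
      (.inter (isClosed_iInter fun x => isClosed_eq (by fun_prop) continuous_const)
        (isClosed_iInter fun y => isClosed_eq (by fun_prop) continuous_const))
  · calc μ z ≤ ∑ y, μ (z.1, y) := Finset.single_le_sum (fun y _ => hμ.1 (z.1, y)) (Finset.mem_univ z.2)
      _ = α z.1 := hμ.2.1 z.1
      _ ≤ 1 := hα.le_one z.1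

lemma exists_isCoupling_isMinOn {α : X → ℝ} {β : Y → ℝ} (hα : IsProb α) (hβ : IsProb β)
    (f : X × Y → ℝ) :
    ∃ μ, IsCoupling μ α β ∧ IsMinOn (fun μ => ∑ z, μ z * f z) {μ | IsCoupling μ α β} μ :=
  (isCompact_setOf_isCoupling β hα).exists_isMinOn ⟨_, isCoupling_mul hα hβ⟩ (by fun_prop)

noncomputable def minCouplingCost (α : X → ℝ) (β : Y → ℝ) (f : X × Y → ℝ) : ℝ :=
  sInf ((fun μ => ∑ z, μ z * f z) '' {μ | IsCoupling μ α β})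

lemma minCouplingCost_le {α : X → ℝ} {β : Y → ℝ} (hα : IsProb α) {μ : X × Y → ℝ}
    (hμ : IsCoupling μ α β) (f : X × Y → ℝ) :
    minCouplingCost α β f ≤ ∑ z, μ z * f z := by
  refine csInf_le ⟨-‖f‖, ?_⟩ ⟨μ, hμ, rfl⟩
  rintro _ ⟨μ', hμ', rfl⟩
  exact neg_le_of_abs_le ((hμ'.isProb hα).abs_sum_mul_le f)

lemma exists_isCoupling_eq_minCouplingCost {α : X → ℝ} {β : Y → ℝ} (hα : IsProb α)
    (hβ : IsProb β) (f : X × Y → ℝ) :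
    ∃ μ, IsCoupling μ α β ∧ ∑ z, μ z * f z = minCouplingCost α β f := by
  obtain ⟨μ, hμ, hmin⟩ := exists_isCoupling_isMinOn hα hβ f
  have hleast : IsLeast ((fun μ => ∑ z, μ z * f z) '' {μ | IsCoupling μ α β}) (∑ z, μ z * f z) :=
    ⟨⟨μ, hμ, rfl⟩, by rintro _ ⟨μ', hμ', rfl⟩; exact hmin hμ'⟩
  exact ⟨μ, hμ, hleast.csInf_eq.symm⟩

lemma lipschitzWith_minCouplingCost {α : X → ℝ} {β : Y → ℝ} (hα : IsProb α) (hβ : IsProb β) :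
    LipschitzWith 1 (minCouplingCost α β) := by
  refine LipschitzWith.of_le_add fun f g => ?_
  obtain ⟨μ, hμ, hμg⟩ := exists_isCoupling_eq_minCouplingCost hα hβ g
  calc minCouplingCost α β f ≤ ∑ z, μ z * f z := minCouplingCost_le hα hμ f
    _ = ∑ z, μ z * g z + ∑ z, μ z * (f - g) z := by
        rw [← Finset.sum_add_distrib]; simp only [Pi.sub_apply]; ring_nf
    _ ≤ minCouplingCost α β g + dist f g := by
        rw [hμg, dist_eq_norm]
        exact add_le_add_right (le_of_abs_le ((hμ.isProb hα).abs_sum_mul_le _)) _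

end Coupling

lemma nonpos_of_le_mul_sum_mul {ι : Type*} [Fintype ι] {γ B : ℝ} (hγ0 : 0 ≤ γ) (hγ1 : γ < 1)
    {k : ℕ → ι → ι → ℝ} (hk : ∀ t i, IsProb (k t i)) {D : ℕ → ι → ℝ}
    (hB : ∀ t i, D t i ≤ B) (hD : ∀ t i, D t i ≤ γ * ∑ j, k t i j * D (t + 1) j) (i : ι) :
    D 0 i ≤ 0 := by
  have hpow : ∀ n t i, D t i ≤ γ ^ n * B := by
    intro n
    induction n with
    | zero => simpa using hB
    | succ n ih =>
      intro t i
      calc D t i ≤ γ * ∑ j, k t i j * D (t + 1) j := hD t i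
        _ ≤ γ * ∑ j, k t i j * (γ ^ n * B) := by
            gcongr with j
            · exact (hk t i).1 j
            · exact ih _ _
        _ = γ ^ (n + 1) * B := by rw [← Finset.sum_mul, (hk t i).2]; ring
  have hlim : Tendsto (fun n => γ ^ n * B) atTop (𝓝 0) := by
    simpa using (tendsto_pow_atTop_nhds_zero_of_lt_one hγ0 hγ1).mul_const B
  exact ge_of_tendsto' hlim fun n => hpow n 0 i

lemma isProbNat_pGeom {δ : ℝ} (hδ0 : 0 < δ) (hδ1 : δ ≤ 1) : IsProbNat (pGeom δ) := by
  refine ⟨fun t => mul_nonneg hδ0.le (pow_nonneg (by linarith) t), ?_⟩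
  have h := (hasSum_geometric_of_lt_one (r := 1 - δ) (by linarith) (by linarith)).mul_left δ
  rwa [sub_sub_cancel, mul_inv_cancel₀ hδ0.ne'] at h

section DiscountedCost

variable {X Y : Type*} [Fintype X] [Fintype Y]

lemma isProb_lawAux {ν : X × Y → ℝ} {m : ℕ → X × Y → X × Y → ℝ}
    (hν : IsProb ν) (hm : ∀ t w, IsProb (m t w)) (t : ℕ) : IsProb (lawAux ν m t) := by
  induction t with
  | zero => exact hν
  | succ t ih =>
    refine ⟨fun z => Finset.sum_nonneg fun w _ => mul_nonneg ((hm t w).1 z) (ih.1 w), ?_⟩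
    simp only [lawAux]
    rw [Finset.sum_comm]
    simp only [← Finset.sum_mul, (hm t _).2, one_mul, ih.2]

lemma lawAux_succ_eq_shift (ν : X × Y → ℝ) (m : ℕ → X × Y → X × Y → ℝ) (t : ℕ) :
    lawAux ν m (t + 1) = lawAux (lawAux ν m 1) (fun s => m (s + 1)) t := by
  induction t with
  | zero => rfl
  | succ t ih => funext z; rw [lawAux, ih]; rfl

lemma lawAux_single_one [DecidableEq X] [DecidableEq Y] (w : X × Y)
    (m : ℕ → X × Y → X × Y → ℝ) : lawAux (Pi.single w 1) m 1 = m 0 w := by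
  funext z
  simp [lawAux, Pi.single_apply]

lemma lawAux_eq_sum_single [DecidableEq X] [DecidableEq Y] (ν : X × Y → ℝ)
    (m : ℕ → X × Y → X × Y → ℝ) (t : ℕ) (z : X × Y) :
    lawAux ν m t z = ∑ w, ν w * lawAux (Pi.single w 1) m t z := by
  induction t generalizing z with
  | zero => simp [lawAux, Pi.single_apply]
  | succ t ih =>
    simp only [lawAux, ih, Finset.mul_sum]
    rw [Finset.sum_comm]
    exact Finset.sum_congr rfl fun _ _ => Finset.sum_congr rfl fun _ _ => by ring

/-- For a Markovian coupling `π`, `discountedCost δ C π.trans π.init` is by definition the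
quantity minimised in `dOTM (pGeom δ)`. -/
noncomputable def discountedCost (δ : ℝ) (C : X × Y → ℝ) (m : ℕ → X × Y → X × Y → ℝ)
    (ν : X × Y → ℝ) : ℝ :=
  ∑' t, pGeom δ t * ∑ z, C z * lawAux ν m t z

variable {δ : ℝ} (hδ0 : 0 < δ) (hδ1 : δ ≤ 1) (C : X × Y → ℝ) {m : ℕ → X × Y → X × Y → ℝ}
  (hm : ∀ t w, IsProb (m t w))
include hδ0 hδ1 hm

lemma norm_pGeom_mul_cost_le {ν : X × Y → ℝ} (hν : IsProb ν) (t : ℕ) :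
    ‖pGeom δ t * ∑ z, C z * lawAux ν m t z‖ ≤ pGeom δ t * ‖C‖ := by
  rw [norm_mul, Real.norm_of_nonneg ((isProbNat_pGeom hδ0 hδ1).1 t)]
  gcongr
  · exact (isProbNat_pGeom hδ0 hδ1).1 t
  · simpa only [mul_comm (C _), Real.norm_eq_abs] using (isProb_lawAux hν hm t).abs_sum_mul_le C

lemma summable_norm_pGeom_mul_cost {ν : X × Y → ℝ} (hν : IsProb ν) :
    Summable fun t => ‖pGeom δ t * ∑ z, C z * lawAux ν m t z‖ :=
  .of_nonneg_of_le (fun _ => norm_nonneg _) (norm_pGeom_mul_cost_le hδ0 hδ1 C hm hν)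
    ((isProbNat_pGeom hδ0 hδ1).2.mul_right ‖C‖).summable

lemma abs_discountedCost_le {ν : X × Y → ℝ} (hν : IsProb ν) :
    |discountedCost δ C m ν| ≤ ‖C‖ :=
  calc |discountedCost δ C m ν| ≤ ∑' t, ‖pGeom δ t * ∑ z, C z * lawAux ν m t z‖ :=
        norm_tsum_le_tsum_norm (summable_norm_pGeom_mul_cost hδ0 hδ1 C hm hν)
    _ ≤ ∑' t, pGeom δ t * ‖C‖ :=
        (summable_norm_pGeom_mul_cost hδ0 hδ1 C hm hν).tsum_le_tsum
          (norm_pGeom_mul_cost_le hδ0 hδ1 C hm hν) ((isProbNat_pGeom hδ0 hδ1).2.mul_right _).summable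
    _ = ‖C‖ := by rw [((isProbNat_pGeom hδ0 hδ1).2.mul_right _).tsum_eq, one_mul]

lemma discountedCost_eq_sum_single [DecidableEq X] [DecidableEq Y] (ν : X × Y → ℝ) :
    discountedCost δ C m ν = ∑ w, ν w * discountedCost δ C m (Pi.single w 1) := by
  have hterm : ∀ t, pGeom δ t * ∑ z, C z * lawAux ν m t z
      = ∑ w, ν w * (pGeom δ t * ∑ z, C z * lawAux (Pi.single w 1) m t z) := by
    intro t
    simp only [lawAux_eq_sum_single ν m t, Finset.mul_sum]
    rw [Finset.sum_comm]
    exact Finset.sum_congr rfl fun _ _ => Finset.sum_congr rfl fun _ _ => by ring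
  rw [discountedCost, tsum_congr hterm, Summable.tsum_finsetSum fun w _ =>
    ((summable_norm_pGeom_mul_cost hδ0 hδ1 C hm (isProb_single w)).of_norm).mul_left (ν w)]
  exact Finset.sum_congr rfl fun w _ => tsum_mul_left

lemma discountedCost_eq_add {ν : X × Y → ℝ} (hν : IsProb ν) :
    discountedCost δ C m ν = δ * ∑ z, C z * ν z
      + (1 - δ) * discountedCost δ C (fun s => m (s + 1)) (lawAux ν m 1) := by
  rw [discountedCost, (summable_norm_pGeom_mul_cost hδ0 hδ1 C hm hν).of_norm.tsum_eq_zero_add,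
    discountedCost, ← tsum_mul_left]
  congr 1
  · simp [pGeom, lawAux]
  · refine tsum_congr fun t => ?_
    rw [lawAux_succ_eq_shift]
    simp only [pGeom, pow_succ]
    ring

lemma discountedCost_shift_single [DecidableEq X] [DecidableEq Y] (t : ℕ) (w : X × Y) :
    discountedCost δ C (fun s => m (s + t)) (Pi.single w 1) = δ * C w
      + (1 - δ) * ∑ z, m t w z * discountedCost δ C (fun s => m (s + (t + 1))) (Pi.single z 1) := by
  have hshift : ∀ n, ∀ s w, IsProb (m (s + n) w) := fun n s w => hm (s + n) w
  have hcomp : (fun s => m (s + 1 + t)) = fun s => m (s + (t + 1)) := by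
    funext s; rw [add_assoc, add_comm 1 t]
  rw [discountedCost_eq_add hδ0 hδ1 C (hshift t) (isProb_single w), lawAux_single_one, zero_add,
    hcomp, discountedCost_eq_sum_single hδ0 hδ1 C (hshift (t + 1))]
  simp [Pi.single_apply]

lemma le_discountedCost_single [DecidableEq X] [DecidableEq Y] {V : X × Y → ℝ}
    (hV : ∀ t z, V z ≤ δ * C z + (1 - δ) * ∑ z', m t z z' * V z') (z : X × Y) :
    V z ≤ discountedCost δ C m (Pi.single z 1) := by
  refine sub_nonpos.1 (nonpos_of_le_mul_sum_mul (γ := 1 - δ) (B := ‖V‖ + ‖C‖) (by linarith)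
    (by linarith) hm (D := fun t z => V z - discountedCost δ C (fun s => m (s + t)) (Pi.single z 1))
    (fun t z => ?_) (fun t z => ?_) z)
  · have hV := norm_le_pi_norm V z
    have hW := abs_discountedCost_le hδ0 hδ1 C (fun s w => hm (s + t) w) (isProb_single z)
    rw [Real.norm_eq_abs] at hV
    linarith [le_abs_self (V z), neg_abs_le (discountedCost δ C (fun s => m (s + t)) (Pi.single z 1))]
  · rw [discountedCost_shift_single hδ0 hδ1 C hm]
    simp only [mul_sub, Finset.sum_sub_distrib]
    linarith [hV t z]

lemma discountedCost_single_le [DecidableEq X] [DecidableEq Y] {V : X × Y → ℝ}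
    (hV : ∀ t z, δ * C z + (1 - δ) * ∑ z', m t z z' * V z' ≤ V z) (z : X × Y) :
    discountedCost δ C m (Pi.single z 1) ≤ V z := by
  refine sub_nonpos.1 (nonpos_of_le_mul_sum_mul (γ := 1 - δ) (B := ‖C‖ + ‖V‖) (by linarith)
    (by linarith) hm (D := fun t z => discountedCost δ C (fun s => m (s + t)) (Pi.single z 1) - V z)
    (fun t z => ?_) (fun t z => ?_) z)
  · have hV := norm_le_pi_norm V z
    have hW := abs_discountedCost_le hδ0 hδ1 C (fun s w => hm (s + t) w) (isProb_single z)
    rw [Real.norm_eq_abs] at hV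
    linarith [neg_abs_le (V z), le_abs_self (discountedCost δ C (fun s => m (s + t)) (Pi.single z 1))]
  · rw [discountedCost_shift_single hδ0 hδ1 C hm]
    simp only [mul_sub, Finset.sum_sub_distrib]
    linarith [hV t z]

end DiscountedCost

section Bellman

variable {X Y : Type*} [Fintype X] [Fintype Y]

noncomputable def bellman (δ : ℝ) (C : X × Y → ℝ) (MX : MarkovChain X) (MY : MarkovChain Y)
    (f : X × Y → ℝ) : X × Y → ℝ :=
  fun z => δ * C z + (1 - δ) * minCouplingCost (MX.kernel z.1) (MY.kernel z.2) f

lemma contractingWith_bellman {δ : ℝ} (hδ0 : 0 < δ) (hδ1 : δ ≤ 1) (C : X × Y → ℝ)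
    (MX : MarkovChain X) (MY : MarkovChain Y) :
    ContractingWith (1 - δ).toNNReal (bellman δ C MX MY) := by
  refine ⟨Real.toNNReal_lt_one.2 (sub_lt_self 1 hδ0), ?_⟩
  refine LipschitzWith.of_dist_le_mul fun f g => (dist_pi_le_iff (by positivity)).2 fun z => ?_
  rw [Real.coe_toNNReal _ (by linarith)]
  have hlip := (lipschitzWith_minCouplingCost (MX.kernel_prob z.1) (MY.kernel_prob z.2)).dist_le_mul f g
  rw [NNReal.coe_one, one_mul, Real.dist_eq] at hlip
  rw [Real.dist_eq, bellman, bellman, add_sub_add_left_eq_sub, ← mul_sub, abs_mul,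
    abs_of_nonneg (by linarith : (0 : ℝ) ≤ 1 - δ)]
  exact mul_le_mul_of_nonneg_left hlip (by linarith)

lemma MarkovCoupling.isProb_trans {MX : MarkovChain X} {MY : MarkovChain Y}
    (π : MarkovCoupling MX MY) (t : ℕ) (w : X × Y) : IsProb (π.trans t w) :=
  (π.trans_coupling t w).isProb (MX.kernel_prob w.1)

variable [DecidableEq X] [DecidableEq Y] {δ : ℝ} (hδ0 : 0 < δ) (hδ1 : δ ≤ 1) {C : X × Y → ℝ}
  {MX : MarkovChain X} {MY : MarkovChain Y} {V : X × Y → ℝ}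
  (hV : Function.IsFixedPt (bellman δ C MX MY) V)
include hδ0 hδ1 hV

lemma le_discountedCost_of_isFixedPt_bellman (π : MarkovCoupling MX MY) (z : X × Y) :
    V z ≤ discountedCost δ C π.trans (Pi.single z 1) := by
  refine le_discountedCost_single hδ0 hδ1 C π.isProb_trans (fun t w => ?_) z
  rw [← congrFun hV w, bellman]
  gcongr
  exact minCouplingCost_le (MX.kernel_prob w.1) (π.trans_coupling t w) V

lemma discountedCost_const_le_of_isFixedPt_bellman {m : X × Y → X × Y → ℝ}
    (hm : ∀ w, IsProb (m w))
    (hmV : ∀ w, ∑ w', m w w' * V w' = minCouplingCost (MX.kernel w.1) (MY.kernel w.2) V)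
    (z : X × Y) : discountedCost δ C (fun _ => m) (Pi.single z 1) ≤ V z :=
  discountedCost_single_le hδ0 hδ1 C (fun _ => hm)
    (fun _ w => by rw [hmV, ← congrFun hV w, bellman]) z

end Bellman

theorem stmt6_general {X Y : Type*} [Fintype X] [Fintype Y]
    (MX : MarkovChain X) (MY : MarkovChain Y)
    (C : X × Y → ℝ)
    (δ : ℝ) (hδ0 : 0 < δ) (hδ1 : δ ≤ 1) :
    ∃ π : MarkovCoupling MX MY, IsTimeHomogeneous π ∧
      ∑' t, pGeom δ t * ∑ z : X × Y, C z * π.law t z = dOTM (pGeom δ) MX MY C := by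
  classical
  obtain ⟨V, hV⟩ : ∃ V, Function.IsFixedPt (bellman δ C MX MY) V :=
    ⟨_, (contractingWith_bellman hδ0 hδ1 C MX MY).fixedPoint_isFixedPt⟩
  choose m hm hmV using fun z : X × Y =>
    exists_isCoupling_eq_minCouplingCost (MX.kernel_prob z.1) (MY.kernel_prob z.2) V
  obtain ⟨ν, hν, hνV⟩ := exists_isCoupling_isMinOn MX.init_prob MY.init_prob V
  let π : MarkovCoupling MX MY := ⟨ν, fun _ => m, hν, fun _ => hm⟩
  have hπ : ∀ π' : MarkovCoupling MX MY,
      discountedCost δ C π.trans π.init ≤ discountedCost δ C π'.trans π'.init := by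
    intro π'
    rw [discountedCost_eq_sum_single hδ0 hδ1 C π.isProb_trans,
      discountedCost_eq_sum_single hδ0 hδ1 C π'.isProb_trans]
    calc ∑ w, ν w * discountedCost δ C π.trans (Pi.single w 1) ≤ ∑ w, ν w * V w := by
          gcongr with w
          · exact hν.1 w
          · exact discountedCost_const_le_of_isFixedPt_bellman hδ0 hδ1 hV (π.isProb_trans 0) hmV w
      _ ≤ ∑ w, π'.init w * V w := hνV π'.init_coupling
      _ ≤ ∑ w, π'.init w * discountedCost δ C π'.trans (Pi.single w 1) := by
          gcongr with w
          · exact π'.init_coupling.1 w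
          · exact le_discountedCost_of_isFixedPt_bellman hδ0 hδ1 hV π' w
  have : Nonempty (MarkovCoupling MX MY) := ⟨π⟩
  have hleast : IsLeast (Set.range fun π' : MarkovCoupling MX MY =>
      discountedCost δ C π'.trans π'.init) (discountedCost δ C π.trans π.init) :=
    ⟨⟨π, rfl⟩, Set.forall_mem_range.2 hπ⟩
  exact ⟨π, fun _ => rfl, hleast.isGLB.ciInf_eq.symm⟩

/-- For `δ > 0`, the infimum defining `d_WL^{δ,(∞)}` is attained by a
time-homogeneous Markovian coupling (hence it is a minimum over the
time-homogeneous Markovian couplings). -/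
theorem stmt6 {X Y : Type*} [Fintype X] [Fintype Y]
    (MX : MarkovChain X) (MY : MarkovChain Y)
    (C : X × Y → ℝ) (hC : ∀ z, 0 ≤ C z)
    (δ : ℝ) (hδ0 : 0 < δ) (hδ1 : δ ≤ 1) :
    ∃ π : MarkovCoupling MX MY, IsTimeHomogeneous π ∧
      ∑' t, pGeom δ t * ∑ z : X × Y, C z * π.law t z = dOTM (pGeom δ) MX MY C :=
  stmt6_general MX MY C δ hδ0 hδ1
end

section
/- For any finite Markov chains 𝒳 and 𝒴, any cost matrix C: X×Y → ℝ₊, and any finite k ∈ ℕ, one has d_WL^{(k)}(𝒳,𝒴;C) = lim_{δ→0⁺} d_WL^{δ,(k)}(𝒳,𝒴;C). -/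
open scoped BigOperators
open Filter Topology

-- auxiliary lemmas
section Aux
variable {X Y : Type*} [Fintype X] [Fintype Y] {MX : MarkovChain X} {MY : MarkovChain Y}

lemma coupling_sum {μ : X × Y → ℝ} {α : X → ℝ} {β : Y → ℝ}
    (h : IsCoupling μ α β) (hα : IsProb α) : ∑ z : X × Y, μ z = 1 := by
  rw [Fintype.sum_prod_type]
  simp only [h.2.1]
  exact hα.2

lemma law_nonneg (π : MarkovCoupling MX MY) : ∀ t z, 0 ≤ π.law t z := by
  intro t
  induction t with
  | zero => exact π.init_coupling.1
  | succ t ih =>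
    intro z
    show 0 ≤ ∑ w : X × Y, π.trans t w z * lawAux π.init π.trans t w
    exact Finset.sum_nonneg fun w _ => mul_nonneg ((π.trans_coupling t w).1 z) (ih w)

lemma law_sum (π : MarkovCoupling MX MY) : ∀ t, ∑ z, π.law t z = 1 := by
  intro t
  induction t with
  | zero => exact coupling_sum π.init_coupling MX.init_prob
  | succ t ih =>
    show ∑ z : X × Y, ∑ w : X × Y, π.trans t w z * lawAux π.init π.trans t w = 1
    rw [Finset.sum_comm]
    have : ∀ w : X × Y, ∑ z : X × Y, π.trans t w z * lawAux π.init π.trans t w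
        = π.law t w := by
      intro w
      rw [← Finset.sum_mul, coupling_sum (π.trans_coupling t w) (MX.kernel_prob w.1), one_mul]
      rfl
    simp only [this]
    exact ih

lemma law_le_one (π : MarkovCoupling MX MY) (t : ℕ) (z : X × Y) : π.law t z ≤ 1 := by
  have := law_sum π t
  calc π.law t z ≤ ∑ z, π.law t z :=
        Finset.single_le_sum (fun w _ => law_nonneg π t w) (Finset.mem_univ z)
    _ = 1 := this

noncomputable instance : Nonempty (MarkovCoupling MX MY) := by
  refine ⟨⟨fun z => MX.init z.1 * MY.init z.2,
    fun t xy z => MX.kernel xy.1 z.1 * MY.kernel xy.2 z.2, ?_, ?_⟩⟩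
  · refine ⟨fun z => mul_nonneg (MX.init_prob.1 _) (MY.init_prob.1 _), fun x => ?_, fun y => ?_⟩
    · dsimp only; rw [← Finset.mul_sum, MY.init_prob.2, mul_one]
    · dsimp only; rw [← Finset.sum_mul, MX.init_prob.2, one_mul]
  · intro t xy
    refine ⟨fun z => mul_nonneg ((MX.kernel_prob _).1 _) ((MY.kernel_prob _).1 _),
      fun x => ?_, fun y => ?_⟩
    · dsimp only; rw [← Finset.mul_sum, (MY.kernel_prob _).2, mul_one]
    · dsimp only; rw [← Finset.sum_mul, (MX.kernel_prob _).2, one_mul]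

lemma abs_iInf_sub_iInf {ι : Type*} [Nonempty ι] {f g : ι → ℝ} {ε : ℝ}
    (hf : BddBelow (Set.range f)) (hg : BddBelow (Set.range g))
    (h : ∀ i, |f i - g i| ≤ ε) : |(⨅ i, f i) - ⨅ i, g i| ≤ ε := by
  rw [abs_sub_le_iff]
  constructor
  · rw [sub_le_iff_le_add, ← sub_le_iff_le_add']
    refine le_ciInf fun i => ?_
    have h1 := (abs_le.mp (h i)).2
    have h2 := ciInf_le hf i
    linarith
  · rw [sub_le_iff_le_add, ← sub_le_iff_le_add']
    refine le_ciInf fun i => ?_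
    have h1 := (abs_le.mp (h i)).1
    have h2 := ciInf_le hg i
    linarith

end Aux

/-- The Dirac mass at `k` on `ℕ`. -/
noncomputable def diracN (k : ℕ) : ℕ → ℝ := fun t => if t = k then 1 else 0

/-- The depth-`k` WL distance, `d_WL^{(k)} = d_OTM^{δ_k}`. -/
noncomputable def dWL {X Y : Type*} [Fintype X] [Fintype Y] (k : ℕ)
    (MX : MarkovChain X) (MY : MarkovChain Y) (C : X × Y → ℝ) : ℝ :=
  dOTM (diracN k) MX MY C

/-- For every finite depth `k`, `d_WL^{(k)} = lim_{δ→0⁺} d_WL^{δ,(k)}`. -/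
theorem stmt7 {X Y : Type*} [Fintype X] [Fintype Y]
    (MX : MarkovChain X) (MY : MarkovChain Y)
    (C : X × Y → ℝ) (hC : ∀ z, 0 ≤ C z) (k : ℕ) :
    Tendsto (fun δ => dOTM (pTrunc δ k) MX MY C) (𝓝[>] (0 : ℝ))
      (𝓝 (dWL k MX MY C)) := by
  set M : ℝ := ∑ z : X × Y, C z with hM
  have hM0 : 0 ≤ M := Finset.sum_nonneg fun z _ => hC z
  set S : MarkovCoupling MX MY → ℕ → ℝ := fun π t => ∑ z, C z * π.law t z with hS
  have hS0 : ∀ π t, 0 ≤ S π t := fun π t =>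
    Finset.sum_nonneg fun z _ => mul_nonneg (hC z) (law_nonneg π t z)
  have hSM : ∀ π t, S π t ≤ M := fun π t =>
    Finset.sum_le_sum fun z _ => mul_le_of_le_one_right (hC z) (law_le_one π t z)
  have key : ∀ (p : ℕ → ℝ), (∀ t, k < t → p t = 0) → ∀ π : MarkovCoupling MX MY,
      (∑' t, p t * S π t) = ∑ t ∈ Finset.range (k+1), p t * S π t := by
    intro p hp π
    refine tsum_eq_sum ?_
    intro t ht
    rw [hp t (by simp [Finset.mem_range] at ht; omega), zero_mul]
  have hWL : dWL k MX MY C = ⨅ π, S π k := by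
    unfold dWL dOTM
    refine iInf_congr fun π => ?_
    rw [key (diracN k) (fun t ht => by simp only [diracN, if_neg (by omega : ¬ t = k)]) π]
    rw [Finset.sum_eq_single_of_mem k (by simp)]
    · simp [diracN]
    · intro b _ hb
      simp [diracN, hb]
  have hptnn : ∀ δ : ℝ, 0 < δ → δ < 1 → ∀ t, 0 ≤ pTrunc δ k t := by
    intro δ h0 h1 t
    unfold pTrunc
    split_ifs
    · exact mul_nonneg h0.le (pow_nonneg (by linarith) _)
    · exact pow_nonneg (by linarith) _
    · exact le_refl 0
  have hOTM : ∀ δ : ℝ, dOTM (pTrunc δ k) MX MY C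
      = ⨅ π, ∑ t ∈ Finset.range (k+1), pTrunc δ k t * S π t := by
    intro δ
    unfold dOTM
    refine iInf_congr fun π => ?_
    exact key _ (fun t ht => by simp only [pTrunc, if_neg (by omega : ¬ t < k),
      if_neg (by omega : ¬ t = k)]) π
  have hbound : ∀ δ : ℝ, 0 < δ → δ < 1 → ∀ π : MarkovCoupling MX MY,
      |(∑ t ∈ Finset.range (k+1), pTrunc δ k t * S π t) - S π k| ≤ 2*M*k*δ := by
    intro δ h0 h1 π
    have hd0 : (0:ℝ) ≤ 1 - δ := by linarith
    have hd1 : (1:ℝ) - δ ≤ 1 := by linarith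
    rw [Finset.sum_range_succ]
    have hk : pTrunc δ k k = (1-δ)^k := by simp [pTrunc]
    have hts : ∀ t ∈ Finset.range k, pTrunc δ k t * S π t = δ * (1-δ)^t * S π t := by
      intro t ht
      simp [pTrunc, Finset.mem_range.mp ht]
    rw [hk, Finset.sum_congr rfl hts]
    set A := ∑ t ∈ Finset.range k, δ * (1-δ)^t * S π t with hA
    have hA0 : 0 ≤ A := Finset.sum_nonneg fun t _ =>
      mul_nonneg (mul_nonneg h0.le (pow_nonneg hd0 _)) (hS0 π t)
    have hAle : A ≤ (k:ℝ) * (δ * M) := by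
      calc A ≤ ∑ t ∈ Finset.range k, δ * M := by
              refine Finset.sum_le_sum fun t _ => ?_
              have h2 : (1-δ)^t ≤ 1 := pow_le_one₀ hd0 hd1
              have h3 := hSM π t
              have h4 := hS0 π t
              calc δ * (1-δ)^t * S π t ≤ δ * 1 * M :=
                    mul_le_mul (mul_le_mul_of_nonneg_left h2 h0.le) h3 h4
                      (by linarith [mul_nonneg h0.le (zero_le_one (α := ℝ))])
                _ = δ * M := by ring
        _ = (k:ℝ) * (δ * M) := by
              rw [Finset.sum_const, Finset.card_range, nsmul_eq_mul]
    have hbern : 1 - (k:ℝ) * δ ≤ (1-δ)^k := by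
      have h := one_add_mul_le_pow (a := -δ) (by linarith) k
      calc (1:ℝ) - k*δ = 1 + k * (-δ) := by ring
        _ ≤ (1 + -δ)^k := h
        _ = (1-δ)^k := by rw [← sub_eq_add_neg]
    have hpk1 : (1-δ)^k ≤ 1 := pow_le_one₀ hd0 hd1
    have hSk0 := hS0 π k
    have hSkM := hSM π k
    have hx : (1 - (1-δ)^k) * S π k ≤ ((k:ℝ)*δ) * M :=
      mul_le_mul (by linarith) hSkM hSk0 (mul_nonneg (Nat.cast_nonneg k) h0.le)
    have hx0 : 0 ≤ (1 - (1-δ)^k) * S π k := mul_nonneg (by linarith) hSk0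
    have heq : A + (1-δ)^k * S π k - S π k = A - (1 - (1-δ)^k) * S π k := by ring
    rw [heq, abs_le]
    constructor <;> nlinarith
  have hdist : ∀ δ ∈ Set.Ioo (0:ℝ) 1,
      dist (dOTM (pTrunc δ k) MX MY C) (dWL k MX MY C) ≤ 2*M*k*δ := by
    intro δ hδ
    rw [Real.dist_eq, hWL, hOTM δ]
    refine abs_iInf_sub_iInf ⟨0, ?_⟩ ⟨0, ?_⟩ fun π => hbound δ hδ.1 hδ.2 π
    · rintro x ⟨π, rfl⟩
      exact Finset.sum_nonneg fun t _ =>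
        mul_nonneg (hptnn δ hδ.1 hδ.2 t) (hS0 π t)
    · rintro x ⟨π, rfl⟩
      exact hS0 π k
  rw [tendsto_iff_dist_tendsto_zero]
  have hlim : Tendsto (fun δ : ℝ => 2*M*k*δ) (𝓝[>] (0:ℝ)) (𝓝 0) := by
    have : Tendsto (fun δ : ℝ => 2*M*k*δ) (𝓝 (0:ℝ)) (𝓝 (2*M*k*0)) :=
      (continuous_const.mul continuous_id).tendsto 0
    simpa using this.mono_left nhdsWithin_le_nhds
  refine squeeze_zero' ?_ ?_ hlim
  · exact Filter.Eventually.of_forall fun δ => dist_nonneg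
  · filter_upwards [Ioo_mem_nhdsGT_of_mem (by norm_num : (0:ℝ) ∈ Set.Ico (0:ℝ) 1)]
      with δ hδ
    exact hdist δ hδ
end

section
/- Let 𝒳, 𝒴 be finite Markov chains, C a cost matrix, and δ ∈ (0,1]. Define C^{δ,(0)} := C and C^{δ,(l+1)}_{ij} := δ C_{ij} + (1−δ) d_W(m^X_i, m^Y_j; C^{δ,(l)}). Then: (1) the map D ↦ (δ C_{ij} + (1−δ) d_W(m^X_i, m^Y_j; D))_{ij} on nonnegative n×m matrices has a unique fixed point C^{δ,(∞)}, and C^{δ,(k)} converges to C^{δ,(∞)} with rate ‖C^{δ,(k)} − C^{δ,(∞)}‖_∞ ≤ (2(1−δ)^k/δ)·‖C‖_∞; (2) d_WL^{δ,(∞)}(𝒳,𝒴;C) = d_W(ν^X, ν^Y; C^{δ,(∞)}) and |d_WL^{δ,(k)}(𝒳,𝒴;C) − d_WL^{δ,(∞)}(𝒳,𝒴;C)| ≤ (2(1−δ)^k/δ)·‖C‖_∞; (3) C^{δ,(∞)} is a constant matrix only if C itself is a constant matrix. -/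
open scoped BigOperators
open Filter Topology

/-- The optimal transport cost between `α` and `β` with cost matrix `C`. -/
noncomputable def dW {X Y : Type*} [Fintype X] [Fintype Y]
    (α : X → ℝ) (β : Y → ℝ) (C : X × Y → ℝ) : ℝ :=
  ⨅ μ : {μ : X × Y → ℝ // IsCoupling μ α β}, ∑ z : X × Y, C z * μ.1 z

/-- The recursively defined cost matrices `C^{δ,(l)}`. -/
noncomputable def Cmat {X Y : Type*} [Fintype X] [Fintype Y]
    (MX : MarkovChain X) (MY : MarkovChain Y) (C : X × Y → ℝ) (δ : ℝ) :
    ℕ → X × Y → ℝ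
  | 0 => C
  | l + 1 => fun z =>
      δ * C z + (1 - δ) * dW (MX.kernel z.1) (MY.kernel z.2) (Cmat MX MY C δ l)

/-- The entrywise supremum norm. -/
noncomputable def supNorm {Z : Type*} [Fintype Z] (C : Z → ℝ) : ℝ := ⨆ z, |C z|

section Helpers

open Filter Topology

variable {X Y : Type*} [Fintype X] [Fintype Y]

lemma isCoupling_prod {α : X → ℝ} {β : Y → ℝ} (hα : IsProb α) (hβ : IsProb β) :
    IsCoupling (fun z : X × Y => α z.1 * β z.2) α β := by
  refine ⟨fun z => mul_nonneg (hα.1 _) (hβ.1 _), fun x => ?_, fun y => ?_⟩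
  · simp only
    rw [← Finset.mul_sum, hβ.2, mul_one]
  · simp only
    rw [← Finset.sum_mul, hα.2, one_mul]

lemma coupling_nonempty {α : X → ℝ} {β : Y → ℝ} (hα : IsProb α) (hβ : IsProb β) :
    Nonempty {μ : X × Y → ℝ // IsCoupling μ α β} :=
  ⟨⟨_, isCoupling_prod hα hβ⟩⟩

lemma coupling_sum_one {α : X → ℝ} {β : Y → ℝ} {μ : X × Y → ℝ}
    (hα : IsProb α) (h : IsCoupling μ α β) : ∑ z : X × Y, μ z = 1 := by
  rw [Fintype.sum_prod_type]
  simp only [h.2.1]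
  exact hα.2

lemma coupling_le_one {α : X → ℝ} {β : Y → ℝ} {μ : X × Y → ℝ}
    (hα : IsProb α) (h : IsCoupling μ α β) (z : X × Y) : μ z ≤ 1 := by
  rw [← coupling_sum_one hα h]
  exact Finset.single_le_sum (fun w _ => h.1 w) (Finset.mem_univ z)

lemma dW_bddBelow {α : X → ℝ} {β : Y → ℝ} (hα : IsProb α) (C : X × Y → ℝ) :
    BddBelow (Set.range fun μ : {μ : X × Y → ℝ // IsCoupling μ α β} =>
      ∑ z : X × Y, C z * μ.1 z) := by
  refine ⟨-∑ z : X × Y, |C z|, ?_⟩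
  rintro x ⟨μ, rfl⟩
  have h : ∑ z : X × Y, -|C z| ≤ ∑ z : X × Y, C z * μ.1 z := by
    refine Finset.sum_le_sum fun z _ => ?_
    have h1 : 0 ≤ μ.1 z := μ.2.1 z
    have h2 : μ.1 z ≤ 1 := coupling_le_one hα μ.2 z
    nlinarith [neg_abs_le (C z), abs_nonneg (C z)]
  simpa using h

lemma dW_le_coupling {α : X → ℝ} {β : Y → ℝ} (hα : IsProb α) {μ : X × Y → ℝ}
    (hμ : IsCoupling μ α β) (C : X × Y → ℝ) :
    dW α β C ≤ ∑ z : X × Y, C z * μ z :=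
  ciInf_le (dW_bddBelow hα C) ⟨μ, hμ⟩

lemma le_dW {α : X → ℝ} {β : Y → ℝ} (hα : IsProb α) (hβ : IsProb β) {C : X × Y → ℝ} {b : ℝ}
    (h : ∀ μ : X × Y → ℝ, IsCoupling μ α β → b ≤ ∑ z : X × Y, C z * μ z) :
    b ≤ dW α β C := by
  haveI := coupling_nonempty hα hβ
  exact le_ciInf fun μ => h μ.1 μ.2

lemma dW_nonneg {α : X → ℝ} {β : Y → ℝ} (hα : IsProb α) (hβ : IsProb β) {C : X × Y → ℝ}
    (hC : ∀ z, 0 ≤ C z) : 0 ≤ dW α β C :=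
  le_dW hα hβ fun μ hμ => Finset.sum_nonneg fun z _ => mul_nonneg (hC z) (hμ.1 z)

lemma dW_le_of_le {α : X → ℝ} {β : Y → ℝ} (hα : IsProb α) (hβ : IsProb β) {C : X × Y → ℝ}
    {M : ℝ} (hC : ∀ z, C z ≤ M) : dW α β C ≤ M := by
  have hμ := isCoupling_prod hα hβ
  refine (dW_le_coupling hα hμ C).trans ?_
  calc ∑ z : X × Y, C z * (α z.1 * β z.2)
      ≤ ∑ z : X × Y, M * (α z.1 * β z.2) :=
        Finset.sum_le_sum fun z _ => mul_le_mul_of_nonneg_right (hC z) (hμ.1 z)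
    _ = M := by rw [← Finset.mul_sum, coupling_sum_one hα hμ, mul_one]

lemma dW_le_dW_add {α : X → ℝ} {β : Y → ℝ} (hα : IsProb α) (hβ : IsProb β)
    {C D : X × Y → ℝ} {d : ℝ} (h : ∀ z, C z ≤ D z + d) :
    dW α β C ≤ dW α β D + d := by
  rw [← sub_le_iff_le_add]
  refine le_dW hα hβ fun μ hμ => ?_
  have h1 := dW_le_coupling hα hμ C
  have h2 : ∑ z : X × Y, C z * μ z ≤ (∑ z : X × Y, D z * μ z) + d := by
    have e : ∑ z : X × Y, (D z + d) * μ z = (∑ z : X × Y, D z * μ z) + d := by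
      simp only [add_mul, Finset.sum_add_distrib]
      rw [← Finset.mul_sum, coupling_sum_one hα hμ, mul_one]
    rw [← e]
    exact Finset.sum_le_sum fun z _ => mul_le_mul_of_nonneg_right (h z) (hμ.1 z)
  linarith

lemma abs_dW_sub_dW_le {α : X → ℝ} {β : Y → ℝ} (hα : IsProb α) (hβ : IsProb β)
    {C D : X × Y → ℝ} {d : ℝ} (h : ∀ z, |C z - D z| ≤ d) :
    |dW α β C - dW α β D| ≤ d := by
  rw [abs_sub_le_iff]
  constructor
  · have := dW_le_dW_add hα hβ (C := C) (D := D) (d := d)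
      (fun z => by have := abs_le.mp (h z); linarith [this.2])
    linarith
  · have := dW_le_dW_add hα hβ (C := D) (D := C) (d := d)
      (fun z => by have := abs_le.mp (h z); linarith [this.1])
    linarith

lemma exists_coupling_le {α : X → ℝ} {β : Y → ℝ} (hα : IsProb α) (hβ : IsProb β)
    (C : X × Y → ℝ) {ε : ℝ} (hε : 0 < ε) :
    ∃ μ : X × Y → ℝ, IsCoupling μ α β ∧ ∑ z : X × Y, C z * μ z ≤ dW α β C + ε := by
  haveI := coupling_nonempty hα hβ
  have h : (⨅ μ : {μ : X × Y → ℝ // IsCoupling μ α β}, ∑ z : X × Y, C z * μ.1 z)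
      < dW α β C + ε := by
    rw [show (⨅ μ : {μ : X × Y → ℝ // IsCoupling μ α β}, ∑ z : X × Y, C z * μ.1 z)
        = dW α β C from rfl]
    linarith
  obtain ⟨μ, hμ⟩ := exists_lt_of_ciInf_lt h
  exact ⟨μ.1, μ.2, hμ.le⟩

lemma abs_le_supNorm {Z : Type*} [Fintype Z] (C : Z → ℝ) (z : Z) : |C z| ≤ supNorm C :=
  le_ciSup (f := fun w => |C w|) (Set.Finite.bddAbove (Set.finite_range _)) z

lemma le_supNorm {Z : Type*} [Fintype Z] (C : Z → ℝ) (z : Z) : C z ≤ supNorm C :=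
  (le_abs_self _).trans (abs_le_supNorm C z)

lemma supNorm_nonneg {Z : Type*} [Fintype Z] [Nonempty Z] (C : Z → ℝ) : 0 ≤ supNorm C :=
  (abs_nonneg _).trans (abs_le_supNorm C (Classical.arbitrary Z))

lemma law_zero {MX : MarkovChain X} {MY : MarkovChain Y} (π : MarkovCoupling MX MY)
    (z : X × Y) : π.law 0 z = π.init z := rfl

lemma law_succ {MX : MarkovChain X} {MY : MarkovChain Y} (π : MarkovCoupling MX MY)
    (t : ℕ) (z : X × Y) :
    π.law (t + 1) z = ∑ w : X × Y, π.trans t w z * π.law t w := rfl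

lemma law_prob {MX : MarkovChain X} {MY : MarkovChain Y} (π : MarkovCoupling MX MY)
    (t : ℕ) : (∀ z, 0 ≤ π.law t z) ∧ ∑ z : X × Y, π.law t z = 1 := by
  induction t with
  | zero => exact ⟨π.init_coupling.1, coupling_sum_one MX.init_prob π.init_coupling⟩
  | succ t ih =>
    constructor
    · intro z
      rw [law_succ]
      exact Finset.sum_nonneg fun w _ => mul_nonneg ((π.trans_coupling t w).1 z) (ih.1 w)
    · calc ∑ z : X × Y, π.law (t + 1) z
          = ∑ w : X × Y, ∑ z : X × Y, π.trans t w z * π.law t w := by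
            simp_rw [law_succ]; rw [Finset.sum_comm]
        _ = ∑ w : X × Y, π.law t w := Finset.sum_congr rfl fun w _ => by
            rw [← Finset.sum_mul, coupling_sum_one (MX.kernel_prob w.1)
              (π.trans_coupling t w), one_mul]
        _ = 1 := ih.2

lemma contract_aux {c A B d q : ℝ} (hq : 0 ≤ q) (h : |A - B| ≤ d) :
    |(c + q * A) - (c + q * B)| ≤ q * d := by
  have e : (c + q * A) - (c + q * B) = q * (A - B) := by ring
  rw [e, abs_mul, abs_of_nonneg hq]
  exact mul_le_mul_of_nonneg_left h hq

end Helpers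

set_option maxHeartbeats 3200000 in
theorem stmt10_aux {X Y : Type*} [Fintype X] [Fintype Y] [Nonempty X] [Nonempty Y]
    (MX : MarkovChain X) (MY : MarkovChain Y)
    (C : X × Y → ℝ) (hC : ∀ z, 0 ≤ C z)
    (δ : ℝ) (hδ0 : 0 < δ) (hδ1 : δ ≤ 1) :
    ∃ Cinf : X × Y → ℝ,
      (∀ z, 0 ≤ Cinf z) ∧
      (∀ z : X × Y,
        Cinf z = δ * C z + (1 - δ) * dW (MX.kernel z.1) (MY.kernel z.2) Cinf) ∧
      (∀ D : X × Y → ℝ, (∀ z, 0 ≤ D z) →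
        (∀ z : X × Y,
          D z = δ * C z + (1 - δ) * dW (MX.kernel z.1) (MY.kernel z.2) D) →
        D = Cinf) ∧
      (∀ k : ℕ,
        supNorm (fun z => Cmat MX MY C δ k z - Cinf z) ≤
          2 * (1 - δ) ^ k / δ * supNorm C) ∧
      dOTM (pGeom δ) MX MY C = dW MX.init MY.init Cinf ∧
      (∀ k : ℕ,
        |dOTM (pTrunc δ k) MX MY C - dOTM (pGeom δ) MX MY C| ≤
          2 * (1 - δ) ^ k / δ * supNorm C) ∧
      ((∃ c : ℝ, ∀ z, Cinf z = c) → ∃ c : ℝ, ∀ z, C z = c) := by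
  classical
  haveI : Nonempty (X × Y) := ⟨(Classical.arbitrary X, Classical.arbitrary Y)⟩
  haveI hNEπ : Nonempty (MarkovCoupling MX MY) :=
    ⟨⟨fun z => MX.init z.1 * MY.init z.2,
      fun _ xy z => MX.kernel xy.1 z.1 * MY.kernel xy.2 z.2,
      isCoupling_prod MX.init_prob MY.init_prob,
      fun _ xy => isCoupling_prod (MX.kernel_prob xy.1) (MY.kernel_prob xy.2)⟩⟩
  have hq0 : (0:ℝ) ≤ 1 - δ := by linarith
  have hq1 : (1:ℝ) - δ < 1 := by linarith
  have hM0 : 0 ≤ supNorm C := supNorm_nonneg C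
  have hCM : ∀ z, C z ≤ supNorm C := le_supNorm C
  -- entrywise bounds on the iterates
  have hCmat : ∀ k (z : X × Y),
      0 ≤ Cmat MX MY C δ k z ∧ Cmat MX MY C δ k z ≤ supNorm C := by
    intro k
    induction k with
    | zero => intro z; exact ⟨hC z, hCM z⟩
    | succ k ih =>
      intro z
      have hdW0 : 0 ≤ dW (MX.kernel z.1) (MY.kernel z.2) (Cmat MX MY C δ k) :=
        dW_nonneg (MX.kernel_prob z.1) (MY.kernel_prob z.2) (fun w => (ih w).1)
      have hdWM : dW (MX.kernel z.1) (MY.kernel z.2) (Cmat MX MY C δ k) ≤ supNorm C :=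
        dW_le_of_le (MX.kernel_prob z.1) (MY.kernel_prob z.2) (fun w => (ih w).2)
      constructor
      · simp only [Cmat]
        nlinarith [mul_nonneg hδ0.le (hC z), mul_nonneg hq0 hdW0]
      · simp only [Cmat]
        nlinarith [mul_le_mul_of_nonneg_left (hCM z) hδ0.le,
          mul_le_mul_of_nonneg_left hdWM hq0]
  -- main contraction estimate
  have est : ∀ k m (z : X × Y),
      |Cmat MX MY C δ (m + k) z - Cmat MX MY C δ k z| ≤ (1 - δ) ^ k * supNorm C := by
    intro k
    induction k with
    | zero =>
      intro m z
      simp only [Nat.add_zero, pow_zero, one_mul]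
      rw [abs_sub_le_iff]
      constructor
      · simp only [Cmat]; linarith [(hCmat m z).2, hC z]
      · simp only [Cmat]; linarith [(hCmat m z).1, hCM z]
    | succ k ih =>
      intro m z
      rw [show m + (k + 1) = (m + k) + 1 from rfl]
      simp only [Cmat]
      have h := abs_dW_sub_dW_le (MX.kernel_prob z.1) (MY.kernel_prob z.2)
        (fun w => ih m w)
      have := contract_aux (c := δ * C z) hq0 h
      calc |(δ * C z + (1 - δ) * dW (MX.kernel z.1) (MY.kernel z.2)
              (Cmat MX MY C δ (m + k))) -
            (δ * C z + (1 - δ) * dW (MX.kernel z.1) (MY.kernel z.2)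
              (Cmat MX MY C δ k))| ≤ (1 - δ) * ((1 - δ) ^ k * supNorm C) := this
        _ = (1 - δ) ^ (k + 1) * supNorm C := by ring
  -- existence of the limit
  have hcauchy : ∀ z : X × Y, ∃ L,
      Tendsto (fun k => Cmat MX MY C δ k z) atTop (𝓝 L) := by
    intro z
    apply cauchySeq_tendsto_of_complete
    refine cauchySeq_of_le_geometric (1 - δ) (supNorm C) hq1 fun n => ?_
    rw [Real.dist_eq, abs_sub_comm]
    have h := est n 1 z
    rw [Nat.add_comm 1 n] at h
    exact h.trans_eq (mul_comm _ _)
  choose Cinf hCinf using hcauchy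
  -- the convergence rate
  have rate : ∀ k (z : X × Y),
      |Cmat MX MY C δ k z - Cinf z| ≤ (1 - δ) ^ k * supNorm C := by
    intro k z
    have h1 : Tendsto (fun m => Cmat MX MY C δ (m + k) z) atTop (𝓝 (Cinf z)) :=
      (hCinf z).comp (Filter.tendsto_add_atTop_nat k)
    have h2 : Tendsto (fun m => |Cmat MX MY C δ (m + k) z - Cmat MX MY C δ k z|)
        atTop (𝓝 (|Cinf z - Cmat MX MY C δ k z|)) :=
      (h1.sub tendsto_const_nhds).abs
    have h3 := le_of_tendsto h2 (Filter.Eventually.of_forall fun m => est k m z)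
    rwa [abs_sub_comm] at h3
  have hCinf0 : ∀ z, 0 ≤ Cinf z := fun z =>
    ge_of_tendsto (hCinf z) (Filter.Eventually.of_forall fun k => (hCmat k z).1)
  have hCinfM : ∀ z, Cinf z ≤ supNorm C := fun z =>
    le_of_tendsto (hCinf z) (Filter.Eventually.of_forall fun k => (hCmat k z).2)
  -- the fixed point equation
  have hfix : ∀ z : X × Y,
      Cinf z = δ * C z + (1 - δ) * dW (MX.kernel z.1) (MY.kernel z.2) Cinf := by
    intro z
    have h1 : Tendsto (fun k => Cmat MX MY C δ (k + 1) z) atTop (𝓝 (Cinf z)) :=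
      (hCinf z).comp (Filter.tendsto_add_atTop_nat 1)
    have h2 : Tendsto (fun k => Cmat MX MY C δ (k + 1) z) atTop
        (𝓝 (δ * C z + (1 - δ) * dW (MX.kernel z.1) (MY.kernel z.2) Cinf)) := by
      rw [tendsto_iff_dist_tendsto_zero]
      refine squeeze_zero (g := fun k => (1 - δ) * ((1 - δ) ^ k * supNorm C))
        (fun k => dist_nonneg) (fun k => ?_) ?_
      · show dist (Cmat MX MY C δ (k + 1) z) _ ≤ (1 - δ) * ((1 - δ) ^ k * supNorm C)
        rw [Real.dist_eq]
        simp only [Cmat]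
        exact contract_aux (c := δ * C z) hq0
          (abs_dW_sub_dW_le (MX.kernel_prob z.1) (MY.kernel_prob z.2)
            (fun w => rate k w))
      · have h := ((tendsto_pow_atTop_nhds_zero_of_lt_one hq0 hq1).mul_const
          (supNorm C)).const_mul (1 - δ)
        simpa using h
    exact tendsto_nhds_unique h1 h2
    -- common numeric bound
  have hbound : ∀ k : ℕ, (1 - δ) ^ k * supNorm C ≤ 2 * (1 - δ) ^ k / δ * supNorm C := by
    intro k
    have h2δ : (1:ℝ) ≤ 2 / δ := by rw [le_div_iff₀ hδ0]; linarith
    calc (1 - δ) ^ k * supNorm C = 1 * ((1 - δ) ^ k * supNorm C) := (one_mul _).symm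
      _ ≤ (2 / δ) * ((1 - δ) ^ k * supNorm C) :=
        mul_le_mul_of_nonneg_right h2δ (mul_nonneg (pow_nonneg hq0 k) hM0)
      _ = 2 * (1 - δ) ^ k / δ * supNorm C := by ring
  -- expectation lemmas
  have hexp_le : ∀ (A : X × Y → ℝ) (B : ℝ), (∀ z, A z ≤ B) →
      ∀ (π : MarkovCoupling MX MY) (t : ℕ), ∑ z : X × Y, A z * π.law t z ≤ B := by
    intro A B hA π t
    calc ∑ z : X × Y, A z * π.law t z ≤ ∑ z : X × Y, B * π.law t z :=
        Finset.sum_le_sum fun z _ => mul_le_mul_of_nonneg_right (hA z) ((law_prob π t).1 z)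
      _ = B := by rw [← Finset.mul_sum, (law_prob π t).2, mul_one]
  have hexp0 : ∀ (A : X × Y → ℝ), (∀ z, 0 ≤ A z) →
      ∀ (π : MarkovCoupling MX MY) (t : ℕ), 0 ≤ ∑ z : X × Y, A z * π.law t z :=
    fun A hA π t => Finset.sum_nonneg fun z _ => mul_nonneg (hA z) ((law_prob π t).1 z)
  have hgeom_nonneg : ∀ t, 0 ≤ pGeom δ t :=
    fun t => mul_nonneg hδ0.le (pow_nonneg hq0 t)
  -- summability of the cost series
  have hsummable : ∀ π : MarkovCoupling MX MY,
      Summable (fun t => pGeom δ t * ∑ z : X × Y, C z * π.law t z) := by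
    intro π
    refine Summable.of_nonneg_of_le (fun t => ?_) (fun t => ?_)
      ((summable_geometric_of_lt_one hq0 hq1).mul_left (δ * supNorm C))
    · exact mul_nonneg (hgeom_nonneg t) (hexp0 C hC π t)
    · calc pGeom δ t * ∑ z : X × Y, C z * π.law t z
          ≤ pGeom δ t * supNorm C :=
            mul_le_mul_of_nonneg_left (hexp_le C _ hCM π t) (hgeom_nonneg t)
        _ = δ * supNorm C * (1 - δ) ^ t := by simp only [pGeom]; ring
  -- decomposition of the running cost via the fixed point
  have hdecomp : ∀ (π : MarkovCoupling MX MY) (t : ℕ),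
      ∑ z : X × Y, Cinf z * π.law t z
        = δ * (∑ z : X × Y, C z * π.law t z)
          + (1 - δ) * ∑ z : X × Y,
              dW (MX.kernel z.1) (MY.kernel z.2) Cinf * π.law t z := by
    intro π t
    rw [Finset.mul_sum, Finset.mul_sum, ← Finset.sum_add_distrib]
    exact Finset.sum_congr rfl fun z _ => by rw [hfix z]; ring
  have hswap : ∀ (π : MarkovCoupling MX MY) (t : ℕ),
      ∑ z : X × Y, Cinf z * π.law (t + 1) z
        = ∑ z : X × Y, (∑ w : X × Y, Cinf w * π.trans t z w) * π.law t z := by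
    intro π t
    simp_rw [law_succ, Finset.mul_sum, Finset.sum_mul]
    rw [Finset.sum_comm]
    exact Finset.sum_congr rfl fun z _ => Finset.sum_congr rfl fun w _ => by ring
  have hkey_le : ∀ (π : MarkovCoupling MX MY) (t : ℕ),
      ∑ z : X × Y, dW (MX.kernel z.1) (MY.kernel z.2) Cinf * π.law t z
        ≤ ∑ z : X × Y, Cinf z * π.law (t + 1) z := by
    intro π t
    rw [hswap π t]
    refine Finset.sum_le_sum fun z _ =>
      mul_le_mul_of_nonneg_right ?_ ((law_prob π t).1 z)
    exact dW_le_coupling (MX.kernel_prob z.1) (π.trans_coupling t z) Cinf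
  -- unrolled inequality, lower-bound direction
  have unroll : ∀ (π : MarkovCoupling MX MY) (k : ℕ),
      ∑ z : X × Y, Cinf z * π.law 0 z
        ≤ (∑ t ∈ Finset.range k, pGeom δ t * ∑ z : X × Y, C z * π.law t z)
          + (1 - δ) ^ k * ∑ z : X × Y, Cinf z * π.law k z := by
    intro π k
    induction k with
    | zero => simp
    | succ k ih =>
      rw [Finset.sum_range_succ]
      have h1 := hdecomp π k
      have h2 := mul_le_mul_of_nonneg_left (hkey_le π k) hq0
      have h3 : (1 - δ) ^ k * (∑ z : X × Y, Cinf z * π.law k z)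
          ≤ (1 - δ) ^ k * (δ * (∑ z : X × Y, C z * π.law k z)
            + (1 - δ) * ∑ z : X × Y, Cinf z * π.law (k + 1) z) := by
        refine mul_le_mul_of_nonneg_left ?_ (pow_nonneg hq0 k)
        linarith
      have h4 : pGeom δ k * (∑ z : X × Y, C z * π.law k z)
          = δ * (1 - δ) ^ k * (∑ z : X × Y, C z * π.law k z) := by
        simp only [pGeom]; try ring
      have h5 : (1 - δ) ^ k * (δ * (∑ z : X × Y, C z * π.law k z)
            + (1 - δ) * ∑ z : X × Y, Cinf z * π.law (k + 1) z)
          = δ * (1 - δ) ^ k * (∑ z : X × Y, C z * π.law k z)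
            + (1 - δ) ^ (k + 1) * ∑ z : X × Y, Cinf z * π.law (k + 1) z := by ring
      linarith
  -- lower bound: dW ≤ cost of every coupling
  have hdir1 : ∀ π : MarkovCoupling MX MY,
      dW MX.init MY.init Cinf ≤ ∑' t, pGeom δ t * ∑ z : X × Y, C z * π.law t z := by
    intro π
    have hS := (hsummable π).hasSum.tendsto_sum_nat
    refine le_of_tendsto_of_tendsto'
      (f := fun k => dW MX.init MY.init Cinf - (1 - δ) ^ k * supNorm C)
      ?_ hS fun k => ?_
    · have h := (tendsto_pow_atTop_nhds_zero_of_lt_one hq0 hq1).mul_const (supNorm C)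
      have h2 := (tendsto_const_nhds
        (x := dW MX.init MY.init Cinf) (f := atTop (α := ℕ))).sub h
      simpa using h2
    · have h1 : dW MX.init MY.init Cinf ≤ ∑ z : X × Y, Cinf z * π.law 0 z :=
        dW_le_coupling MX.init_prob π.init_coupling Cinf
      have h2 := unroll π k
      have h3 : ∑ z : X × Y, Cinf z * π.law k z ≤ supNorm C := hexp_le Cinf _ hCinfM π k
      have h4 := mul_le_mul_of_nonneg_left h3 (pow_nonneg hq0 k)
      show dW MX.init MY.init Cinf - (1 - δ) ^ k * supNorm C
        ≤ ∑ t ∈ Finset.range k, pGeom δ t * ∑ z : X × Y, C z * π.law t z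
      linarith
  -- geometric sums
  have geom_id : ∀ k : ℕ, ∑ t ∈ Finset.range k, (1 - δ) ^ (t + 1)
      = ((1 - δ) - (1 - δ) ^ (k + 1)) / δ := by
    intro k
    induction k with
    | zero => simp
    | succ k ih =>
      rw [Finset.sum_range_succ, ih]
      field_simp
      ring
  have geom_bound : ∀ k : ℕ, ∑ t ∈ Finset.range k, (1 - δ) ^ (t + 1) ≤ 1 / δ := by
    intro k
    rw [geom_id k, div_le_div_iff₀ hδ0 hδ0]
    nlinarith [mul_nonneg (pow_nonneg hq0 (k + 1)) hδ0.le, sq_nonneg δ]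
  have hcost_nonneg : ∀ (p : ℕ → ℝ), (∀ t, 0 ≤ p t) → ∀ π : MarkovCoupling MX MY,
      0 ≤ ∑' t, p t * ∑ z : X × Y, C z * π.law t z :=
    fun p hp π => tsum_nonneg fun t => mul_nonneg (hp t) (hexp0 C hC π t)
  have hbddOTM : ∀ (p : ℕ → ℝ), (∀ t, 0 ≤ p t) →
      BddBelow (Set.range fun π : MarkovCoupling MX MY =>
        ∑' t, p t * ∑ z : X × Y, C z * π.law t z) := by
    intro p hp
    exact ⟨0, by rintro x ⟨π, rfl⟩; exact hcost_nonneg p hp π⟩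
  -- the value of the discounted distance
  have hOTM_eq : dOTM (pGeom δ) MX MY C = dW MX.init MY.init Cinf := by
    rw [dOTM]
    refine le_antisymm ?_ (le_ciInf hdir1)
    refine le_of_forall_pos_le_add fun ε hε => ?_
    set ε' := ε * δ / 2 with hε'
    have hε'0 : 0 < ε' := by positivity
    obtain ⟨μ0, hμ0c, hμ0le⟩ := exists_coupling_le MX.init_prob MY.init_prob Cinf hε'0
    have hκ : ∀ z : X × Y, ∃ κ : X × Y → ℝ,
        IsCoupling κ (MX.kernel z.1) (MY.kernel z.2) ∧
        ∑ w : X × Y, Cinf w * κ w ≤ dW (MX.kernel z.1) (MY.kernel z.2) Cinf + ε' :=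
      fun z => exists_coupling_le (MX.kernel_prob z.1) (MY.kernel_prob z.2) Cinf hε'0
    choose κ hκc hκle using hκ
    set π : MarkovCoupling MX MY := ⟨μ0, fun _ z => κ z, hμ0c, fun _ z => hκc z⟩
      with hπdef
    have hπtrans : ∀ (t : ℕ) (z : X × Y), π.trans t z = κ z := fun t z => by rw [hπdef]
    have hπinit : π.init = μ0 := by rw [hπdef]
    have rkey : ∀ t : ℕ, ∑ z : X × Y, Cinf z * π.law (t + 1) z
        ≤ (∑ z : X × Y, dW (MX.kernel z.1) (MY.kernel z.2) Cinf * π.law t z) + ε' := by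
      intro t
      rw [hswap π t]
      have h1 : ∀ z : X × Y, (∑ w : X × Y, Cinf w * π.trans t z w) * π.law t z
          ≤ (dW (MX.kernel z.1) (MY.kernel z.2) Cinf + ε') * π.law t z := by
        intro z
        refine mul_le_mul_of_nonneg_right ?_ ((law_prob π t).1 z)
        rw [hπtrans t z]
        exact hκle z
      refine (Finset.sum_le_sum fun z _ => h1 z).trans ?_
      simp_rw [add_mul]
      rw [Finset.sum_add_distrib, ← Finset.mul_sum, (law_prob π t).2, mul_one]
    have runroll : ∀ k : ℕ,
        (∑ t ∈ Finset.range k, pGeom δ t * ∑ z : X × Y, C z * π.law t z)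
          + (1 - δ) ^ k * ∑ z : X × Y, Cinf z * π.law k z
        ≤ (∑ z : X × Y, Cinf z * π.law 0 z)
          + ε' * ∑ t ∈ Finset.range k, (1 - δ) ^ (t + 1) := by
      intro k
      induction k with
      | zero => simp
      | succ k ih =>
        rw [Finset.sum_range_succ, Finset.sum_range_succ]
        have h1 := hdecomp π k
        have h2 := mul_le_mul_of_nonneg_left (rkey k) hq0
        have h3 : (1 - δ) ^ k * (δ * (∑ z : X × Y, C z * π.law k z)
              + (1 - δ) * ∑ z : X × Y, Cinf z * π.law (k + 1) z)
            ≤ (1 - δ) ^ k * ((∑ z : X × Y, Cinf z * π.law k z) + (1 - δ) * ε') := by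
          refine mul_le_mul_of_nonneg_left ?_ (pow_nonneg hq0 k)
          linarith
        have h4 : pGeom δ k * (∑ z : X × Y, C z * π.law k z)
            = δ * (1 - δ) ^ k * (∑ z : X × Y, C z * π.law k z) := by
          simp only [pGeom]; try ring
        have h5 : (1 - δ) ^ k * (δ * (∑ z : X × Y, C z * π.law k z)
              + (1 - δ) * ∑ z : X × Y, Cinf z * π.law (k + 1) z)
            = δ * (1 - δ) ^ k * (∑ z : X × Y, C z * π.law k z)
              + (1 - δ) ^ (k + 1) * ∑ z : X × Y, Cinf z * π.law (k + 1) z := by ring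
        have h6 : (1 - δ) ^ k * ((∑ z : X × Y, Cinf z * π.law k z) + (1 - δ) * ε')
            = (1 - δ) ^ k * (∑ z : X × Y, Cinf z * π.law k z)
              + (1 - δ) ^ (k + 1) * ε' := by ring
        have h7 : ε' * (∑ t ∈ Finset.range k, (1 - δ) ^ (t + 1) + (1 - δ) ^ (k + 1))
            = ε' * (∑ t ∈ Finset.range k, (1 - δ) ^ (t + 1))
              + (1 - δ) ^ (k + 1) * ε' := by ring
        linarith
    have hSk : ∀ k : ℕ,
        ∑ t ∈ Finset.range k, pGeom δ t * ∑ z : X × Y, C z * π.law t z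
          ≤ dW MX.init MY.init Cinf + ε := by
      intro k
      have h1 := runroll k
      have h2 : 0 ≤ (1 - δ) ^ k * ∑ z : X × Y, Cinf z * π.law k z :=
        mul_nonneg (pow_nonneg hq0 k) (hexp0 Cinf hCinf0 π k)
      have h3 : ∑ z : X × Y, Cinf z * π.law 0 z ≤ dW MX.init MY.init Cinf + ε' := by
        have e : ∑ z : X × Y, Cinf z * π.law 0 z = ∑ z : X × Y, Cinf z * μ0 z := by
          refine Finset.sum_congr rfl fun z _ => ?_
          rw [law_zero, hπinit]
        rw [e]; exact hμ0le
      have h4 : ε' * ∑ t ∈ Finset.range k, (1 - δ) ^ (t + 1) ≤ ε' * (1 / δ) :=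
        mul_le_mul_of_nonneg_left (geom_bound k) hε'0.le
      have h5 : ε' + ε' * (1 / δ) ≤ ε := by
        rw [hε']
        have e1 : ε * δ / 2 * (1 / δ) = ε / 2 := by field_simp
        nlinarith [hε.le]
      linarith
    have hcost : ∑' t, pGeom δ t * ∑ z : X × Y, C z * π.law t z
        ≤ dW MX.init MY.init Cinf + ε := by
      refine Summable.tsum_le_of_sum_le (hsummable π) fun s => ?_
      obtain ⟨n, hn⟩ := s.exists_nat_subset_range
      refine le_trans (Finset.sum_le_sum_of_subset_of_nonneg hn fun t _ _ => ?_) (hSk n)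
      exact mul_nonneg (hgeom_nonneg t) (hexp0 C hC π t)
    exact le_trans (ciInf_le (hbddOTM _ hgeom_nonneg) π) hcost
  -- truncation bound
  have htrunc : ∀ k : ℕ, |dOTM (pTrunc δ k) MX MY C - dOTM (pGeom δ) MX MY C|
      ≤ 2 * (1 - δ) ^ k / δ * supNorm C := by
    intro k
    have hpt0 : ∀ t, 0 ≤ pTrunc δ k t := by
      intro t
      simp only [pTrunc]
      split_ifs
      · exact mul_nonneg hδ0.le (pow_nonneg hq0 t)
      · exact pow_nonneg hq0 k
      · exact le_refl 0
    have hper : ∀ π : MarkovCoupling MX MY,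
        |(∑' t, pTrunc δ k t * ∑ z : X × Y, C z * π.law t z)
          - ∑' t, pGeom δ t * ∑ z : X × Y, C z * π.law t z|
          ≤ (1 - δ) ^ k * supNorm C := by
      intro π
      have hc0 : ∀ t, 0 ≤ ∑ z : X × Y, C z * π.law t z := hexp0 C hC π
      have hcM : ∀ t, ∑ z : X × Y, C z * π.law t z ≤ supNorm C := hexp_le C _ hCM π
      have h0 : ∀ t ∉ Finset.range (k + 1),
          pTrunc δ k t * ∑ z : X × Y, C z * π.law t z = 0 := by
        intro t ht
        rw [Finset.mem_range, not_lt] at ht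
        have h1 : ¬ t < k := by omega
        have h2 : t ≠ k := by omega
        simp [pTrunc, h1, h2]
      have htr : (∑' t, pTrunc δ k t * ∑ z : X × Y, C z * π.law t z)
          = (∑ t ∈ Finset.range k, pGeom δ t * ∑ z : X × Y, C z * π.law t z)
            + (1 - δ) ^ k * ∑ z : X × Y, C z * π.law k z := by
        rw [tsum_eq_sum h0, Finset.sum_range_succ]
        congr 1
        · refine Finset.sum_congr rfl fun t ht => ?_
          have htk : t < k := Finset.mem_range.mp ht
          simp [pTrunc, pGeom, htk]
        · simp [pTrunc, lt_irrefl]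
      have hgeo : (∑ t ∈ Finset.range k, pGeom δ t * ∑ z : X × Y, C z * π.law t z)
          + (∑' t, pGeom δ (t + k) * ∑ z : X × Y, C z * π.law (t + k) z)
          = ∑' t, pGeom δ t * ∑ z : X × Y, C z * π.law t z :=
        Summable.sum_add_tsum_nat_add k (hsummable π)
      have htail0 : 0 ≤ ∑' t, pGeom δ (t + k) * ∑ z : X × Y, C z * π.law (t + k) z :=
        tsum_nonneg fun t => mul_nonneg (hgeom_nonneg _) (hc0 _)
      have htailM : (∑' t, pGeom δ (t + k) * ∑ z : X × Y, C z * π.law (t + k) z)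
          ≤ (1 - δ) ^ k * supNorm C := by
        have hs1 : Summable fun t =>
            pGeom δ (t + k) * ∑ z : X × Y, C z * π.law (t + k) z :=
          (summable_nat_add_iff k).mpr (hsummable π)
        have hs2 : Summable fun t : ℕ => δ * supNorm C * (1 - δ) ^ k * (1 - δ) ^ t :=
          (summable_geometric_of_lt_one hq0 hq1).mul_left _
        have hle : ∀ t : ℕ, pGeom δ (t + k) * ∑ z : X × Y, C z * π.law (t + k) z
            ≤ δ * supNorm C * (1 - δ) ^ k * (1 - δ) ^ t := by
          intro t
          have h1 : pGeom δ (t + k) * ∑ z : X × Y, C z * π.law (t + k) z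
              ≤ pGeom δ (t + k) * supNorm C :=
            mul_le_mul_of_nonneg_left (hcM _) (hgeom_nonneg _)
          have h2 : pGeom δ (t + k) * supNorm C
              = δ * supNorm C * (1 - δ) ^ k * (1 - δ) ^ t := by
            simp only [pGeom, pow_add]; ring
          linarith
        refine (Summable.tsum_le_tsum hle hs1 hs2).trans ?_
        rw [tsum_mul_left, tsum_geometric_of_lt_one hq0 hq1,
          show (1:ℝ) - (1 - δ) = δ from by ring,
          show δ * supNorm C * (1 - δ) ^ k * δ⁻¹
            = (1 - δ) ^ k * supNorm C * (δ * δ⁻¹) from by ring,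
          mul_inv_cancel₀ hδ0.ne', mul_one]
      have hk0 : 0 ≤ (1 - δ) ^ k * ∑ z : X × Y, C z * π.law k z :=
        mul_nonneg (pow_nonneg hq0 k) (hc0 k)
      have hkM : (1 - δ) ^ k * ∑ z : X × Y, C z * π.law k z
          ≤ (1 - δ) ^ k * supNorm C :=
        mul_le_mul_of_nonneg_left (hcM k) (pow_nonneg hq0 k)
      rw [htr, ← hgeo, abs_sub_le_iff]
      constructor <;> linarith
    have hcomp : ∀ (f g : MarkovCoupling MX MY → ℝ),
        BddBelow (Set.range f) →
        (∀ π, |f π - g π| ≤ (1 - δ) ^ k * supNorm C) →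
        (⨅ π, f π) ≤ (⨅ π, g π) + (1 - δ) ^ k * supNorm C := by
      intro f g hbf h
      rw [← sub_le_iff_le_add]
      refine le_ciInf fun π => ?_
      have h1 := ciInf_le hbf π
      have h2 := (abs_le.mp (h π)).2
      linarith
    simp only [dOTM]
    have h1 := hcomp _ _ (hbddOTM _ hpt0) hper
    have h2 := hcomp _ _ (hbddOTM _ hgeom_nonneg)
      (fun π => by rw [abs_sub_comm]; exact hper π)
    have h3 := hbound k
    rw [abs_sub_le_iff]
    constructor <;> linarith
  refine ⟨Cinf, hCinf0, hfix, ?_, ?_, hOTM_eq, htrunc, ?_⟩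
  · -- uniqueness
    intro D hD0 hDfix
    have hbdd : BddAbove (Set.range fun z : X × Y => |D z - Cinf z|) :=
      Set.Finite.bddAbove (Set.finite_range _)
    set d := ⨆ z : X × Y, |D z - Cinf z| with hd
    have hled : ∀ z, |D z - Cinf z| ≤ d :=
      fun z => le_ciSup (f := fun z : X × Y => |D z - Cinf z|) hbdd z
    have hstep : ∀ z : X × Y, |D z - Cinf z| ≤ (1 - δ) * d := by
      intro z
      rw [hDfix z, hfix z]
      exact contract_aux (c := δ * C z) hq0
        (abs_dW_sub_dW_le (MX.kernel_prob z.1) (MY.kernel_prob z.2) hled)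
    have hd0 : 0 ≤ d := (abs_nonneg _).trans (hled (Classical.arbitrary _))
    have hdq : d ≤ (1 - δ) * d := ciSup_le hstep
    have hd_le : d ≤ 0 := by
      by_contra h
      push_neg at h
      nlinarith
    funext z
    have h0 : |D z - Cinf z| ≤ 0 := (hled z).trans hd_le
    exact sub_eq_zero.mp (abs_eq_zero.mp (le_antisymm h0 (abs_nonneg _)))
  · -- rate in sup norm
    intro k
    simp only [supNorm]
    exact ciSup_le fun z => (rate k z).trans (hbound k)
  · -- constancy
    rintro ⟨c, hc'⟩
    refine ⟨c, fun z => ?_⟩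
    have h1 := hfix z
    have h2 : dW (MX.kernel z.1) (MY.kernel z.2) Cinf = c := by
      have hCinf_eq : Cinf = fun _ => c := funext hc'
      rw [hCinf_eq]
      refine le_antisymm
        (dW_le_of_le (MX.kernel_prob z.1) (MY.kernel_prob z.2) fun _ => le_refl c) ?_
      refine le_dW (MX.kernel_prob z.1) (MY.kernel_prob z.2) fun μ hμ => ?_
      rw [← Finset.mul_sum, coupling_sum_one (MX.kernel_prob z.1) hμ, mul_one]
    rw [hc' z, h2] at h1
    have h3 : δ * C z = δ * c := by linarith
    exact mul_left_cancel₀ hδ0.ne' h3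


/-- For `δ ∈ (0,1]`: the iteration defining `C^{δ,(l)}` has a unique fixed
point `C^{δ,(∞)}` among nonnegative matrices, to which `C^{δ,(k)}` converges at
rate `2(1-δ)^k/δ · ‖C‖_∞`; the distance `d_WL^{δ,(∞)}` is computed from this
fixed point, with the corresponding approximation bound; and `C^{δ,(∞)}` is
constant only if `C` is constant. -/
theorem stmt10 {X Y : Type*} [Fintype X] [Fintype Y] [Nonempty X] [Nonempty Y]
    (MX : MarkovChain X) (MY : MarkovChain Y)
    (C : X × Y → ℝ) (hC : ∀ z, 0 ≤ C z)
    (δ : ℝ) (hδ0 : 0 < δ) (hδ1 : δ ≤ 1) :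
    ∃ Cinf : X × Y → ℝ,
      (∀ z, 0 ≤ Cinf z) ∧
      (∀ z : X × Y,
        Cinf z = δ * C z + (1 - δ) * dW (MX.kernel z.1) (MY.kernel z.2) Cinf) ∧
      (∀ D : X × Y → ℝ, (∀ z, 0 ≤ D z) →
        (∀ z : X × Y,
          D z = δ * C z + (1 - δ) * dW (MX.kernel z.1) (MY.kernel z.2) D) →
        D = Cinf) ∧
      (∀ k : ℕ,
        supNorm (fun z => Cmat MX MY C δ k z - Cinf z) ≤
          2 * (1 - δ) ^ k / δ * supNorm C) ∧
      dOTM (pGeom δ) MX MY C = dW MX.init MY.init Cinf ∧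
      (∀ k : ℕ,
        |dOTM (pTrunc δ k) MX MY C - dOTM (pGeom δ) MX MY C| ≤
          2 * (1 - δ) ^ k / δ * supNorm C) ∧
      ((∃ c : ℝ, ∀ z, Cinf z = c) → ∃ c : ℝ, ∀ z, C z = c) :=
  stmt10_aux MX MY C hC δ hδ0 hδ1
end
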